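/- arXiv:2308.02148 — 4 statements merged into one kernel-verified Lean document; each statement's English description precedes it below -/
import Mathlib

section
/- Let (V, 𝕋) be a regular, well-posed ADP whose value space V is chain complete. Then the fundamental ADP optimality results hold: (B1) V_Σ has a greatest element v*; (B2) v* is the unique fixed point of the Bellman operator T in V; (B3) Bellman's principle of optimality holds (for every σ ∈ Σ, σ is optimal if and only if σ is v*-greedy). -/
/-!
Chain completeness alone gives, by Zorn's lemma, fixed points of monotone maps: a maximal
post-fixed point is fixed, and below any `w` with `f w ≤ w` there is a fixed point. Applied to
`T σ` together with uniqueness of its fixed point, this makes `v_σ` the least `v` with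
`T σ v ≤ v`. Applied to the (monotone) Bellman operator it gives a fixed point `v*`; then
`T τ v* ≤ T v* = v*` bounds every `v_τ` by `v*`, and `v* = v_σ` for a `v*`-greedy `σ`. The same
two facts give uniqueness of the Bellman fixed point and the principle of optimality.
-/

section FixedPoint

variable {V : Type*} [PartialOrder V] {f : V → V}

theorem IsLUB.le_map_of_forall_le_map (hf : Monotone f) {c : Set V} {s : V} (hs : IsLUB c s)
    (hc : ∀ z ∈ c, z ≤ f z) : s ≤ f s :=
  hs.2 fun z hz => (hc z hz).trans (hf (hs.1 hz))

variable (hcc : ∀ C : Set V, IsChain (· ≤ ·) C → ∃ w : V, IsLUB C w)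
include hcc

theorem exists_map_eq_self_of_isChain_isLUB (hf : Monotone f) : ∃ m, f m = m := by
  obtain ⟨m, hm⟩ := zorn_le₀ {v | v ≤ f v} fun c hcS hc => by
    obtain ⟨s, hs⟩ := hcc c hc
    exact ⟨s, hs.le_map_of_forall_le_map hf hcS, fun z hz => hs.1 hz⟩
  exact ⟨m, hm.2 (hf hm.1) hm.1 |>.antisymm hm.1⟩

theorem exists_map_eq_self_le_of_isChain_isLUB (hf : Monotone f) {w : V} (hw : f w ≤ w) :
    ∃ m, f m = m ∧ m ≤ w := by
  obtain ⟨m, hm⟩ := zorn_le₀ {v | v ≤ f v ∧ v ≤ w} fun c hcS hc => by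
    obtain ⟨s, hs⟩ := hcc c hc
    exact ⟨s, ⟨hs.le_map_of_forall_le_map hf fun z hz => (hcS hz).1,
      hs.2 fun z hz => (hcS hz).2⟩, fun z hz => hs.1 hz⟩
  have hfm : f m ≤ m := hm.2 ⟨hf hm.1.1, (hf hm.1.2).trans hw⟩ hm.1.1
  exact ⟨m, hfm.antisymm hm.1.1, hm.1.2⟩

end FixedPoint

section ADP

variable {V Pol : Type*} [PartialOrder V] {T : Pol → V → V} {Bell : V → V} {vfix : Pol → V}
  (hreg : ∀ v : V, ∃ σ : Pol, ∀ τ : Pol, T τ v ≤ T σ v)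
  (hBell : ∀ (v : V) (σ : Pol), (∀ τ : Pol, T τ v ≤ T σ v) → Bell v = T σ v)

include hreg hBell in
theorem map_le_bellman (τ : Pol) (v : V) : T τ v ≤ Bell v := by
  obtain ⟨σ, hσ⟩ := hreg v
  exact (hσ τ).trans_eq (hBell v σ hσ).symm

include hreg hBell in
theorem monotone_bellman (hmono : ∀ σ : Pol, Monotone (T σ)) : Monotone Bell := by
  intro v w hvw
  obtain ⟨σ, hσ⟩ := hreg v
  rw [hBell v σ hσ]
  exact (hmono σ hvw).trans (map_le_bellman hreg hBell σ w)

theorem policyValue_le_of_map_le (hmono : ∀ σ : Pol, Monotone (T σ))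
    (huniq : ∀ (σ : Pol) (v : V), T σ v = v → v = vfix σ)
    (hcc : ∀ C : Set V, IsChain (· ≤ ·) C → ∃ w : V, IsLUB C w) {σ : Pol} {v : V}
    (hv : T σ v ≤ v) : vfix σ ≤ v := by
  obtain ⟨m, hm, hmv⟩ := exists_map_eq_self_le_of_isChain_isLUB hcc (hmono σ) hv
  exact huniq σ m hm ▸ hmv

include hBell in
theorem eq_policyValue_of_greedy (huniq : ∀ (σ : Pol) (v : V), T σ v = v → v = vfix σ)
    {v : V} (hv : Bell v = v) {σ : Pol} (hσ : ∀ τ : Pol, T τ v ≤ T σ v) : v = vfix σ :=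
  huniq σ v ((hBell v σ hσ).symm.trans hv)

end ADP

theorem stmt9_general {V Pol : Type*} [PartialOrder V]
    (T : Pol → V → V) (hmono : ∀ σ : Pol, Monotone (T σ))
    -- regularity:
    (hreg : ∀ v : V, ∃ σ : Pol, ∀ τ : Pol, T τ v ≤ T σ v)
    -- the Bellman operator:
    (Bell : V → V)
    (hBell : ∀ (v : V) (σ : Pol), (∀ τ : Pol, T τ v ≤ T σ v) → Bell v = T σ v)
    -- well-posedness:
    (vfix : Pol → V) (hfix : ∀ σ : Pol, T σ (vfix σ) = vfix σ)
    (huniq : ∀ (σ : Pol) (v : V), T σ v = v → v = vfix σ)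
    -- `V` is chain complete:
    (hcc : ∀ C : Set V, IsChain (· ≤ ·) C → ∃ w : V, IsLUB C w) :
    ∃ σstar : Pol,
      -- (B1):
      (∀ τ : Pol, vfix τ ≤ vfix σstar) ∧
      -- (B2):
      Bell (vfix σstar) = vfix σstar ∧
      (∀ v : V, Bell v = v → v = vfix σstar) ∧
      -- (B3):
      (∀ σ : Pol, (∀ τ : Pol, vfix τ ≤ vfix σ) ↔
        (∀ τ : Pol, T τ (vfix σstar) ≤ T σ (vfix σstar))) := by
  have le_of_bellman_fixed : ∀ {v : V}, Bell v = v → ∀ τ, vfix τ ≤ v := fun hv τ =>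
    policyValue_le_of_map_le hmono huniq hcc ((map_le_bellman hreg hBell τ _).trans_eq hv)
  obtain ⟨vstar, hvstar⟩ :=
    exists_map_eq_self_of_isChain_isLUB hcc (monotone_bellman hreg hBell hmono)
  obtain ⟨σstar, hσstar⟩ := hreg vstar
  obtain rfl := eq_policyValue_of_greedy hBell huniq hvstar hσstar
  refine ⟨σstar, le_of_bellman_fixed hvstar, hvstar, fun v hv => ?_, fun σ => ⟨fun hσ τ => ?_, ?_⟩⟩
  · obtain ⟨σ, hσ⟩ := hreg v
    refine le_antisymm ?_ (policyValue_le_of_map_le hmono huniq hcc ?_)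
    · exact eq_policyValue_of_greedy hBell huniq hv hσ ▸ le_of_bellman_fixed hvstar σ
    · exact (map_le_bellman hreg hBell σstar v).trans_eq hv
  · have hopt : vfix σ = vfix σstar := (le_of_bellman_fixed hvstar σ).antisymm (hσ σstar)
    rw [← hopt, hfix σ, hopt]
    exact (map_le_bellman hreg hBell τ _).trans_eq hvstar
  · intro hσ
    exact eq_policyValue_of_greedy hBell huniq hvstar hσ ▸ le_of_bellman_fixed hvstar

/-- Theorem t:bkn: Let `(V, 𝕋)` be a regular well-posed ADP
whose value space `V` is chain complete (bounded, every chain has a supremum).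
Then the fundamental ADP optimality results hold: (B1) `V_Σ` has a greatest
element `v* = vfix σ*`; (B2) `v*` is the unique fixed point of the Bellman
operator in `V`; (B3) Bellman's principle of optimality holds. -/
theorem stmt9 {V Pol : Type*} [PartialOrder V] [Nonempty Pol]
    (T : Pol → V → V) (hmono : ∀ σ : Pol, Monotone (T σ))
    -- regularity:
    (hreg : ∀ v : V, ∃ σ : Pol, ∀ τ : Pol, T τ v ≤ T σ v)
    -- the Bellman operator:
    (Bell : V → V)
    (hBell : ∀ (v : V) (σ : Pol), (∀ τ : Pol, T τ v ≤ T σ v) → Bell v = T σ v)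
    -- well-posedness:
    (vfix : Pol → V) (hfix : ∀ σ : Pol, T σ (vfix σ) = vfix σ)
    (huniq : ∀ (σ : Pol) (v : V), T σ v = v → v = vfix σ)
    -- `V` is chain complete:
    (bot top : V) (hbot : ∀ v : V, bot ≤ v) (htop : ∀ v : V, v ≤ top)
    (hcc : ∀ C : Set V, IsChain (· ≤ ·) C → ∃ w : V, IsLUB C w) :
    ∃ σstar : Pol,
      -- (B1):
      (∀ τ : Pol, vfix τ ≤ vfix σstar) ∧
      -- (B2):
      Bell (vfix σstar) = vfix σstar ∧
      (∀ v : V, Bell v = v → v = vfix σstar) ∧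
      -- (B3):
      (∀ σ : Pol, (∀ τ : Pol, vfix τ ≤ vfix σ) ↔
        (∀ τ : Pol, T τ (vfix σstar) ≤ T σ (vfix σstar))) :=
  stmt9_general T hmono hreg Bell hBell vfix hfix huniq hcc
end

section
/- Let (V, 𝕋) be a regular, well-posed ADP that is order continuous, and suppose V is countably chain complete. Then: (i) the fundamental ADP optimality results hold ((B1) V_Σ has a greatest element v*; (B2) v* is the unique fixed point of T in V; (B3) σ is optimal if and only if σ is v*-greedy); and (ii) VFI, OPI and HPI all converge: for every v ∈ V_U, Tⁿv ↑ v*, W_mⁿv ↑ v* and Hⁿv ↑ v*. -/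
/-!
By order continuity, Kleene iteration in the countably chain complete poset `V` shows that the
fixed point `v_σ` of each policy operator is both the greatest `u` with `u ≤ T_σ u` and the least
`u` with `T_σ u ≤ u`. The Bellman operator `Bell` is a pointwise maximum of the `T_σ` that is
attained at a greedy policy, so it is again monotone and order continuous, and its iterates from
`⊥` rise to a fixed point `v*`. Every `v_τ` lies below any fixed point `w` of `Bell`, since
`T_τ w ≤ Bell w = w`; hence so does every `u ∈ V_U`, as `u ≤ v_{σ_u}`. A fixed point lies in
`V_U`, so fixed points are unique, and `v* = v_{σ_{v*}}` is the greatest element of `V_Σ`.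
On `V_U` the operators `Bell`, `W_m` and `H` stay inside `V_U` and lie above `Bell`, so their
iterates are squeezed between `Bellⁿ v ↑ v*` and `v*`.
-/

open Set Function

section

variable {V : Type*} [PartialOrder V]

def SeqOrderContinuous (S : V → V) : Prop :=
  ∀ (f : ℕ → V) (v : V), Monotone f → IsLUB (range f) v →
    IsLUB (range fun n => S (f n)) (S v)

section Iterates

variable {S R : V → V} {u v x z : V}

theorem iterate_le_of_map_le (hS : Monotone S) (hux : u ≤ x) (hx : S x ≤ x) (n : ℕ) :
    S^[n] u ≤ x :=
  hS.seq_le_seq (x := fun k => S^[k] u) (y := fun _ => x) n hux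
    (fun k _ => (iterate_succ_apply' S k u).le) fun _ _ => hx

theorem SeqOrderContinuous.map_eq_of_isLUB_iterate (hc : SeqOrderContinuous S)
    (hS : Monotone S) (hu : u ≤ S u) (hz : IsLUB (range fun n => S^[n] u) z) : S z = z := by
  have hmono := hS.monotone_iterate_of_le_map hu
  have hSz := hc _ z hmono hz
  apply le_antisymm
  · exact hSz.2 <| forall_mem_range.2 fun n => hz.1 ⟨n + 1, iterate_succ_apply' S n u⟩
  · exact hz.2 <| forall_mem_range.2 fun n =>
      (hmono n.le_succ).trans (hSz.1 ⟨n, (iterate_succ_apply' S n u).symm⟩)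

theorem Set.MapsTo.monotone_iterate_of_le_map {P : Set V} (hP : MapsTo S P P)
    (hS : ∀ x ∈ P, x ≤ S x) (hv : v ∈ P) : Monotone fun n => S^[n] v :=
  monotone_nat_of_le_succ fun n => by
    rw [iterate_succ_apply']
    exact hS _ (hP.iterate n hv)

theorem Set.MapsTo.iterate_le_iterate {P : Set V} (hR : Monotone R) (hP : MapsTo S P P)
    (hRS : ∀ x ∈ P, R x ≤ S x) (hv : v ∈ P) (n : ℕ) : R^[n] v ≤ S^[n] v :=
  hR.seq_le_seq (x := fun k => R^[k] v) (y := fun k => S^[k] v) n le_rfl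
    (fun k _ => (iterate_succ_apply' R k v).le)
    fun k _ => (hRS _ (hP.iterate k hv)).trans (iterate_succ_apply' S k v).ge

end Iterates

theorem isLUB_range_of_le_of_le {ι : Type*} {f g : ι → V} {a : V} (hf : IsLUB (range f) a)
    (hfg : ∀ i, f i ≤ g i) (hga : ∀ i, g i ≤ a) : IsLUB (range g) a :=
  ⟨forall_mem_range.2 hga,
    fun _ hb => hf.2 <| forall_mem_range.2 fun i => (hfg i).trans (hb ⟨i, rfl⟩)⟩

section PointwiseMax

variable {ι : Type*} {F : ι → V → V} {S : V → V}

theorem monotone_of_le_of_exists_eq (hF : ∀ i, Monotone (F i)) (hle : ∀ i v, F i v ≤ S v)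
    (hS : ∀ v, ∃ i, S v = F i v) : Monotone S := fun u v huv => by
  obtain ⟨i, hi⟩ := hS u
  exact hi ▸ (hF i huv).trans (hle i v)

theorem seqOrderContinuous_of_le_of_exists_eq (hF : ∀ i, Monotone (F i))
    (hFc : ∀ i, SeqOrderContinuous (F i)) (hle : ∀ i v, F i v ≤ S v)
    (hS : ∀ v, ∃ i, S v = F i v) : SeqOrderContinuous S := by
  intro f v hf hv
  refine ⟨forall_mem_range.2 fun n =>
    monotone_of_le_of_exists_eq hF hle hS (hv.1 ⟨n, rfl⟩), fun b hb => ?_⟩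
  obtain ⟨i, hi⟩ := hS v
  rw [hi]
  exact (hFc i f v hf hv).2 <| forall_mem_range.2 fun n => (hle i (f n)).trans (hb ⟨n, rfl⟩)

end PointwiseMax

variable {Pol : Type*}

def IsGreedy (T : Pol → V → V) (σ : Pol) (v : V) : Prop :=
  ∀ τ, T τ v ≤ T σ v

def optimisticPolicyOp (T : Pol → V → V) (sel : V → Pol) (m : ℕ) (v : V) : V :=
  (T (sel v))^[m] v

def howardPolicyOp (vfix : Pol → V) (sel : V → Pol) (v : V) : V :=
  vfix (sel v)

structure IsOrderContinuousADP (T : Pol → V → V) (vfix : Pol → V) : Prop where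
  monotone : ∀ σ, Monotone (T σ)
  seqOrderContinuous : ∀ σ, SeqOrderContinuous (T σ)
  map_vfix : ∀ σ, T σ (vfix σ) = vfix σ
  eq_vfix : ∀ σ v, T σ v = v → v = vfix σ
  exists_bot : ∃ b : V, ∀ v, b ≤ v
  exists_isLUB : ∀ f : ℕ → V, Monotone f → ∃ w, IsLUB (range f) w

namespace IsOrderContinuousADP

variable {T : Pol → V → V} {vfix : Pol → V} {Bell : V → V} {sel : V → Pol} {σ : Pol}
  {u v w : V}

section Policy

variable (h : IsOrderContinuousADP T vfix)
include h

theorem le_vfix_of_le_map (hu : u ≤ T σ u) : u ≤ vfix σ := by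
  obtain ⟨z, hz⟩ := h.exists_isLUB _ ((h.monotone σ).monotone_iterate_of_le_map hu)
  rw [h.eq_vfix σ z ((h.seqOrderContinuous σ).map_eq_of_isLUB_iterate (h.monotone σ) hu hz)]
    at hz
  exact hz.1 ⟨0, rfl⟩

theorem vfix_le_of_map_le (hu : T σ u ≤ u) : vfix σ ≤ u := by
  obtain ⟨b, hb⟩ := h.exists_bot
  obtain ⟨z, hz⟩ := h.exists_isLUB _ ((h.monotone σ).monotone_iterate_of_le_map (hb (T σ b)))
  rw [h.eq_vfix σ z
    ((h.seqOrderContinuous σ).map_eq_of_isLUB_iterate (h.monotone σ) (hb _) hz)] at hz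
  exact hz.2 <| forall_mem_range.2 (iterate_le_of_map_le (h.monotone σ) (hb u) hu)

end Policy

theorem map_le_bellman (hsel : ∀ v, IsGreedy T (sel v) v) (hBell : ∀ v, Bell v = T (sel v) v)
    (τ : Pol) (v : V) : T τ v ≤ Bell v :=
  hBell v ▸ hsel v τ

theorem eq_vfix_of_bellman_eq (h : IsOrderContinuousADP T vfix)
    (hBell : ∀ v, Bell v = T (sel v) v) (hw : Bell w = w) : w = vfix (sel w) :=
  h.eq_vfix _ _ ((hBell w).symm.trans hw)

section Bellman

variable (h : IsOrderContinuousADP T vfix) (hsel : ∀ v, IsGreedy T (sel v) v)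
  (hBell : ∀ v, Bell v = T (sel v) v)
include h hsel hBell

theorem monotone_bellman : Monotone Bell :=
  monotone_of_le_of_exists_eq h.monotone (map_le_bellman hsel hBell) fun v => ⟨sel v, hBell v⟩

theorem seqOrderContinuous_bellman : SeqOrderContinuous Bell :=
  seqOrderContinuous_of_le_of_exists_eq h.monotone h.seqOrderContinuous
    (map_le_bellman hsel hBell) fun v => ⟨sel v, hBell v⟩

theorem bellman_eq_of_isLUB_iterate (hv : v ≤ Bell v)
    (hu : IsLUB (range fun n => Bell^[n] v) u) : Bell u = u :=
  (h.seqOrderContinuous_bellman hsel hBell).map_eq_of_isLUB_iterate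
    (h.monotone_bellman hsel hBell) hv hu

theorem exists_bellman_eq : ∃ w, Bell w = w := by
  obtain ⟨b, hb⟩ := h.exists_bot
  obtain ⟨w, hw⟩ :=
    h.exists_isLUB _ ((h.monotone_bellman hsel hBell).monotone_iterate_of_le_map (hb (Bell b)))
  exact ⟨w, h.bellman_eq_of_isLUB_iterate hsel hBell (hb _) hw⟩

theorem vfix_le_of_bellman_eq (hw : Bell w = w) (τ : Pol) : vfix τ ≤ w :=
  h.vfix_le_of_map_le ((map_le_bellman hsel hBell τ w).trans hw.le)

theorem le_of_le_bellman (hw : Bell w = w) (hu : u ≤ Bell u) : u ≤ w :=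
  (h.le_vfix_of_le_map (hBell u ▸ hu)).trans (h.vfix_le_of_bellman_eq hsel hBell hw _)

theorem eq_of_bellman_eq (hu : Bell u = u) (hw : Bell w = w) : u = w :=
  le_antisymm (h.le_of_le_bellman hsel hBell hw hu.ge) (h.le_of_le_bellman hsel hBell hu hw.ge)

theorem forall_vfix_le_iff_isGreedy (hw : Bell w = w) (σ : Pol) :
    (∀ τ, vfix τ ≤ vfix σ) ↔ IsGreedy T σ w := by
  have hw_le : ∀ τ, T τ w ≤ w := fun τ => (map_le_bellman hsel hBell τ w).trans hw.le
  constructor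
  · intro hσ τ
    have hσw : vfix σ = w := le_antisymm (h.vfix_le_of_bellman_eq hsel hBell hw σ)
      ((h.eq_vfix_of_bellman_eq hBell hw).trans_le (hσ _))
    calc T τ w ≤ w := hw_le τ
      _ = T σ w := by rw [← hσw, h.map_vfix]
  · intro hσ τ
    have hσw : T σ w = w := le_antisymm (hw_le σ) (hw.symm.trans_le (hBell w ▸ hσ (sel w)))
    rw [← h.eq_vfix σ w hσw]
    exact h.vfix_le_of_bellman_eq hsel hBell hw τ

theorem isLUB_bellman_iterate (hw : Bell w = w) (hv : v ≤ Bell v) :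
    IsLUB (range fun n => Bell^[n] v) w := by
  obtain ⟨u, hu⟩ :=
    h.exists_isLUB _ ((h.monotone_bellman hsel hBell).monotone_iterate_of_le_map hv)
  rwa [h.eq_of_bellman_eq hsel hBell (h.bellman_eq_of_isLUB_iterate hsel hBell hv hu) hw] at hu

theorem monotone_iterate_and_isLUB_of_bellman_le (hw : Bell w = w) {S : V → V}
    (hS : MapsTo S {x | x ≤ Bell x} {x | x ≤ Bell x}) (hBS : ∀ x, x ≤ Bell x → Bell x ≤ S x)
    (hv : v ≤ Bell v) :
    Monotone (fun n => S^[n] v) ∧ IsLUB (range fun n => S^[n] v) w :=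
  ⟨hS.monotone_iterate_of_le_map (fun x hx => hx.trans (hBS x hx)) hv,
    isLUB_range_of_le_of_le (h.isLUB_bellman_iterate hsel hBell hw hv)
      (hS.iterate_le_iterate (h.monotone_bellman hsel hBell) hBS hv)
      fun n => h.le_of_le_bellman hsel hBell hw (hS.iterate n hv)⟩

theorem monotone_bellman_iterate_and_isLUB (hw : Bell w = w) (hv : v ≤ Bell v) :
    Monotone (fun n => Bell^[n] v) ∧ IsLUB (range fun n => Bell^[n] v) w :=
  h.monotone_iterate_and_isLUB_of_bellman_le hsel hBell hw
    (fun _ hx => h.monotone_bellman hsel hBell hx) (fun _ _ => le_rfl) hv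

theorem monotone_optimisticPolicyOp_iterate_and_isLUB (hw : Bell w = w) {m : ℕ} (hm : 1 ≤ m)
    (hv : v ≤ Bell v) :
    Monotone (fun n => (optimisticPolicyOp T sel m)^[n] v) ∧
      IsLUB (range fun n => (optimisticPolicyOp T sel m)^[n] v) w := by
  have hmono : ∀ x, x ≤ Bell x → Monotone fun n => (T (sel x))^[n] x := fun x hx =>
    (h.monotone (sel x)).monotone_iterate_of_le_map (hBell x ▸ hx)
  refine h.monotone_iterate_and_isLUB_of_bellman_le hsel hBell hw
    (fun x hx => ?_) (fun x hx => ?_) hv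
  · exact (hmono x hx m.le_succ).trans
      ((iterate_succ_apply' _ _ _).trans_le (map_le_bellman hsel hBell _ _))
  · exact (hBell x).trans_le (hmono x hx hm)

theorem monotone_howardPolicyOp_iterate_and_isLUB (hw : Bell w = w) (hv : v ≤ Bell v) :
    Monotone (fun n => (howardPolicyOp vfix sel)^[n] v) ∧
      IsLUB (range fun n => (howardPolicyOp vfix sel)^[n] v) w := by
  refine h.monotone_iterate_and_isLUB_of_bellman_le hsel hBell hw
    (fun x _ => ?_) (fun x hx => ?_) hv
  · exact (h.map_vfix (sel x)).symm.trans_le (map_le_bellman hsel hBell _ _)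
  · exact (hBell x).trans_le
      ((h.monotone _ (h.le_vfix_of_le_map (hBell x ▸ hx))).trans_eq (h.map_vfix _))

end Bellman

end IsOrderContinuousADP

end

theorem stmt10_general {V Pol : Type*} [PartialOrder V]
    (T : Pol → V → V) (hmono : ∀ σ : Pol, Monotone (T σ))
    -- the Bellman operator:
    (Bell : V → V)
    (hBell : ∀ (v : V) (σ : Pol), (∀ τ : Pol, T τ v ≤ T σ v) → Bell v = T σ v)
    -- well-posedness:
    (vfix : Pol → V) (hfix : ∀ σ : Pol, T σ (vfix σ) = vfix σ)
    (huniq : ∀ (σ : Pol) (v : V), T σ v = v → v = vfix σ)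
    -- order continuity of every policy operator:
    (hcont : ∀ (σ : Pol) (f : ℕ → V) (v : V), Monotone f → IsLUB (Set.range f) v →
      IsLUB (Set.range fun n => T σ (f n)) (T σ v))
    -- `V` is countably chain complete:
    (bot : V) (hbot : ∀ v : V, bot ≤ v)
    (hccc : ∀ f : ℕ → V, Monotone f → ∃ w : V, IsLUB (Set.range f) w)
    -- a fixed greedy selection, defining `H v = vfix (sel v)` and
    -- `W_m v = (T (sel v))^[m] v`:
    (sel : V → Pol) (hsel : ∀ v : V, ∀ τ : Pol, T τ v ≤ T (sel v) v)
    (m : ℕ) (hm : 1 ≤ m) :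
    ∃ σstar : Pol,
      -- (B1):
      (∀ τ : Pol, vfix τ ≤ vfix σstar) ∧
      -- (B2):
      Bell (vfix σstar) = vfix σstar ∧
      (∀ v : V, Bell v = v → v = vfix σstar) ∧
      -- (B3):
      (∀ σ : Pol, (∀ τ : Pol, vfix τ ≤ vfix σ) ↔
        (∀ τ : Pol, T τ (vfix σstar) ≤ T σ (vfix σstar))) ∧
      -- (ii) convergence of VFI, OPI and HPI on `V_U`:
      (∀ v : V, v ≤ Bell v →
        (Monotone fun n => Bell^[n] v) ∧
        IsLUB (Set.range fun n => Bell^[n] v) (vfix σstar) ∧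
        (Monotone fun n => (fun w => (T (sel w))^[m] w)^[n] v) ∧
        IsLUB (Set.range fun n => (fun w => (T (sel w))^[m] w)^[n] v) (vfix σstar) ∧
        (Monotone fun n => (fun w => vfix (sel w))^[n] v) ∧
        IsLUB (Set.range fun n => (fun w => vfix (sel w))^[n] v) (vfix σstar)) := by
  have h : IsOrderContinuousADP T vfix := ⟨hmono, hcont, hfix, huniq, ⟨bot, hbot⟩, hccc⟩
  have hBsel : ∀ v, Bell v = T (sel v) v := fun v => hBell v (sel v) (hsel v)
  obtain ⟨w, hw⟩ := h.exists_bellman_eq hsel hBsel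
  refine ⟨sel w, ?_⟩
  rw [← h.eq_vfix_of_bellman_eq hBsel hw]
  refine ⟨h.vfix_le_of_bellman_eq hsel hBsel hw, hw,
    fun v hv => h.eq_of_bellman_eq hsel hBsel hv hw,
    h.forall_vfix_le_iff_isGreedy hsel hBsel hw, fun v hv => ?_⟩
  obtain ⟨hVmono, hVlub⟩ := h.monotone_bellman_iterate_and_isLUB hsel hBsel hw hv
  obtain ⟨hOmono, hOlub⟩ :=
    h.monotone_optimisticPolicyOp_iterate_and_isLUB hsel hBsel hw hm hv
  obtain ⟨hHmono, hHlub⟩ := h.monotone_howardPolicyOp_iterate_and_isLUB hsel hBsel hw hv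
  exact ⟨hVmono, hVlub, hOmono, hOlub, hHmono, hHlub⟩

/-- Theorem t:impliesms: Let `(V, 𝕋)` be a regular well-posed
ADP that is order continuous, with `V` countably chain complete.  Then (i) the
fundamental ADP optimality results hold, and (ii) VFI, OPI and HPI all
converge: for every `v ∈ V_U` the iterates `Bellⁿ v`, `W_mⁿ v`, `Hⁿ v` are
increasing with supremum `v*`. -/
theorem stmt10 {V Pol : Type*} [PartialOrder V] [Nonempty Pol]
    (T : Pol → V → V) (hmono : ∀ σ : Pol, Monotone (T σ))
    -- regularity:
    (hreg : ∀ v : V, ∃ σ : Pol, ∀ τ : Pol, T τ v ≤ T σ v)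
    -- the Bellman operator:
    (Bell : V → V)
    (hBell : ∀ (v : V) (σ : Pol), (∀ τ : Pol, T τ v ≤ T σ v) → Bell v = T σ v)
    -- well-posedness:
    (vfix : Pol → V) (hfix : ∀ σ : Pol, T σ (vfix σ) = vfix σ)
    (huniq : ∀ (σ : Pol) (v : V), T σ v = v → v = vfix σ)
    -- order continuity of every policy operator:
    (hcont : ∀ (σ : Pol) (f : ℕ → V) (v : V), Monotone f → IsLUB (Set.range f) v →
      IsLUB (Set.range fun n => T σ (f n)) (T σ v))
    -- `V` is countably chain complete:
    (bot top : V) (hbot : ∀ v : V, bot ≤ v) (htop : ∀ v : V, v ≤ top)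
    (hccc : ∀ f : ℕ → V, Monotone f → ∃ w : V, IsLUB (Set.range f) w)
    -- a fixed greedy selection, defining `H v = vfix (sel v)` and
    -- `W_m v = (T (sel v))^[m] v`:
    (sel : V → Pol) (hsel : ∀ v : V, ∀ τ : Pol, T τ v ≤ T (sel v) v)
    (m : ℕ) (hm : 1 ≤ m) :
    ∃ σstar : Pol,
      -- (B1):
      (∀ τ : Pol, vfix τ ≤ vfix σstar) ∧
      -- (B2):
      Bell (vfix σstar) = vfix σstar ∧
      (∀ v : V, Bell v = v → v = vfix σstar) ∧
      -- (B3):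
      (∀ σ : Pol, (∀ τ : Pol, vfix τ ≤ vfix σ) ↔
        (∀ τ : Pol, T τ (vfix σstar) ≤ T σ (vfix σstar))) ∧
      -- (ii) convergence of VFI, OPI and HPI on `V_U`:
      (∀ v : V, v ≤ Bell v →
        (Monotone fun n => Bell^[n] v) ∧
        IsLUB (Set.range fun n => Bell^[n] v) (vfix σstar) ∧
        (Monotone fun n => (fun w => (T (sel w))^[m] w)^[n] v) ∧
        IsLUB (Set.range fun n => (fun w => (T (sel w))^[m] w)^[n] v) (vfix σstar) ∧
        (Monotone fun n => (fun w => vfix (sel w))^[n] v) ∧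
        IsLUB (Set.range fun n => (fun w => vfix (sel w))^[n] v) (vfix σstar)) :=
  stmt10_general T hmono Bell hBell vfix hfix huniq hcont bot hbot hccc sel hsel m hm
end

section
/- Let (V, 𝕋) be a regular, well-posed ADP that is order continuous and order stable. Suppose V is countably Dedekind complete and (V, 𝕋) is bounded above, i.e., there exists u ∈ V with T_σ u ≤ u for all σ ∈ Σ. Then: (i) the fundamental ADP optimality results hold ((B1) V_Σ has a greatest element v*; (B2) v* is the unique fixed point of T in V; (B3) σ is optimal if and only if σ is v*-greedy); and (ii) VFI, OPI and HPI all converge: for every v ∈ V_U, Tⁿv ↑ v*, W_mⁿv ↑ v* and Hⁿv ↑ v*. -/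
/-!
Realise the Bellman operator as `B v = T_{σ_v} v` through the greedy selection; it is monotone,
and by downward stability each of its fixed points `w` dominates every `v_σ`, while `w = v_{σ_w}`
by well-posedness. Hence `B` has at most one fixed point, and that fixed point is the greatest
element `v*` of `V_Σ`. From any `v ∈ V_U` the VFI sequence increases and stays below the upper
bound `u`, so it has a supremum by countable Dedekind completeness, and order continuity of
`T_{σ_w}` at that supremum `w` makes it a fixed point of `B`, i.e. `v*`. The OPI and HPI
iterates stay in `V_U`, dominate the VFI iterates and are bounded by `v*`, so they converge
to `v*` too.
-/

open Set

section

variable {V Pol : Type*}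

section Order

variable [PartialOrder V]

def OrderContinuous (S : V → V) : Prop :=
  ∀ (f : ℕ → V) (v : V), Monotone f → IsLUB (range f) v → IsLUB (range fun n => S (f n)) (S v)

/-- The Bellman operator need not be order continuous: a continuous `g ≤ f` touching it at the
supremum suffices (for VFI, the policy operator greedy at the supremum). -/
theorem map_eq_of_isLUB_iterate {f g : V → V} (hf : Monotone f) (hg : OrderContinuous g)
    (hgf : ∀ x, g x ≤ f x) {v w : V} (hv : v ≤ f v)
    (hw : IsLUB (range fun n => f^[n] v) w) (hfw : f w ≤ g w) : f w = w := by
  have hchain := hf.monotone_iterate_of_le_map hv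
  have hle : ∀ n, f^[n] v ≤ w := fun n => hw.1 ⟨n, rfl⟩
  refine le_antisymm (hfw.trans ((hg _ w hchain hw).2 ?_)) (hw.2 ?_)
  · rintro _ ⟨n, rfl⟩
    calc g (f^[n] v) ≤ f (f^[n] v) := hgf _
      _ = f^[n + 1] v := (Function.iterate_succ_apply' f n v).symm
      _ ≤ w := hle (n + 1)
  · rintro _ ⟨n, rfl⟩
    calc f^[n] v ≤ f^[n + 1] v := hchain n.le_succ
      _ = f (f^[n] v) := Function.iterate_succ_apply' f n v
      _ ≤ f w := hf (hle n)

theorem isLUB_iterate_of_sandwich {f F : V → V} (hf : Monotone f)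
    (hfF : ∀ x, x ≤ f x → f x ≤ F x) (hF : ∀ x, x ≤ f x → F x ≤ f (F x))
    {v w : V} (hbound : ∀ x, x ≤ f x → x ≤ w) (hv : v ≤ f v)
    (hw : IsLUB (range fun n => f^[n] v) w) :
    Monotone (fun n => F^[n] v) ∧ IsLUB (range fun n => F^[n] v) w := by
  have hsub : ∀ n, F^[n] v ≤ f (F^[n] v) := by
    intro n
    induction n with
    | zero => exact hv
    | succ n ih => rw [Function.iterate_succ_apply']; exact hF _ ih
  have hdom : ∀ n, f^[n] v ≤ F^[n] v := by
    intro n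
    induction n with
    | zero => exact le_rfl
    | succ n ih =>
      rw [Function.iterate_succ_apply', Function.iterate_succ_apply']
      exact (hf ih).trans (hfF _ (hsub n))
  refine ⟨monotone_nat_of_le_succ fun n => ?_, ?_, ?_⟩
  · rw [Function.iterate_succ_apply']
    exact (hsub n).trans (hfF _ (hsub n))
  · rintro _ ⟨n, rfl⟩
    exact hbound _ (hsub n)
  · intro b hb
    exact hw.2 fun _ ⟨n, hn⟩ => hn ▸ (hdom n).trans (hb ⟨n, rfl⟩)

end Order

section ADP

variable {T : Pol → V → V} {vfix : Pol → V} {sel : V → Pol} {Bell : V → V}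

theorem eq_vfix_sel_of_bellman_eq (huniq : ∀ σ v, T σ v = v → v = vfix σ)
    (hB : ∀ v, Bell v = T (sel v) v) {w : V} (hw : Bell w = w) : w = vfix (sel w) :=
  huniq _ w ((hB w).symm.trans hw)

variable [PartialOrder V]

theorem monotone_bellman_s12 (hmono : ∀ σ, Monotone (T σ)) (hsel : ∀ v τ, T τ v ≤ T (sel v) v)
    (hB : ∀ v, Bell v = T (sel v) v) : Monotone Bell := fun v w hvw => by
  rw [hB, hB]
  exact (hmono (sel v) hvw).trans (hsel w (sel v))

theorem vfix_le_bellman (hfix : ∀ σ, T σ (vfix σ) = vfix σ) (hsel : ∀ v τ, T τ v ≤ T (sel v) v)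
    (hB : ∀ v, Bell v = T (sel v) v) (σ : Pol) : vfix σ ≤ Bell (vfix σ) := by
  rw [hB]
  exact (hfix σ).symm.le.trans (hsel _ σ)

theorem le_vfix_sel_of_le_bellman (hup : ∀ σ v, v ≤ T σ v → v ≤ vfix σ)
    (hB : ∀ v, Bell v = T (sel v) v) {v : V} (hv : v ≤ Bell v) : v ≤ vfix (sel v) :=
  hup _ v (hB v ▸ hv)

theorem vfix_le_of_bellman_eq (hdown : ∀ σ v, T σ v ≤ v → vfix σ ≤ v)
    (hsel : ∀ v τ, T τ v ≤ T (sel v) v) (hB : ∀ v, Bell v = T (sel v) v)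
    {w : V} (hw : Bell w = w) (τ : Pol) : vfix τ ≤ w :=
  hdown τ w ((hsel w τ).trans ((hB w).symm.trans hw).le)

theorem bellman_eq_unique (hdown : ∀ σ v, T σ v ≤ v → vfix σ ≤ v)
    (huniq : ∀ σ v, T σ v = v → v = vfix σ) (hsel : ∀ v τ, T τ v ≤ T (sel v) v)
    (hB : ∀ v, Bell v = T (sel v) v) {v w : V} (hv : Bell v = v) (hw : Bell w = w) :
    v = w := by
  refine le_antisymm ?_ ?_
  · rw [eq_vfix_sel_of_bellman_eq huniq hB hv]
    exact vfix_le_of_bellman_eq hdown hsel hB hw _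
  · rw [eq_vfix_sel_of_bellman_eq huniq hB hw]
    exact vfix_le_of_bellman_eq hdown hsel hB hv _

theorem exists_isLUB_bellman_iterate (hmono : ∀ σ, Monotone (T σ))
    (hcont : ∀ σ, OrderContinuous (T σ)) (hup : ∀ σ v, v ≤ T σ v → v ≤ vfix σ)
    (hdown : ∀ σ v, T σ v ≤ v → vfix σ ≤ v)
    (hded : ∀ S : Set V, S.Countable → S.Nonempty → BddAbove S → ∃ w, IsLUB S w)
    {u : V} (hu : ∀ σ, T σ u ≤ u) (hsel : ∀ v τ, T τ v ≤ T (sel v) v)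
    (hB : ∀ v, Bell v = T (sel v) v) {v : V} (hv : v ≤ Bell v) :
    ∃ w, IsLUB (range fun n => Bell^[n] v) w ∧ Bell w = w := by
  have hBmono := monotone_bellman_s12 hmono hsel hB
  have hsub : ∀ n, Bell^[n] v ≤ Bell (Bell^[n] v) := fun n =>
    (Function.iterate_succ_apply' Bell n v).symm ▸ hBmono.monotone_iterate_of_le_map hv n.le_succ
  have hbdd : BddAbove (range fun n => Bell^[n] v) := ⟨u, by
    rintro _ ⟨n, rfl⟩
    exact (le_vfix_sel_of_le_bellman hup hB (hsub n)).trans (hdown _ u (hu _))⟩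
  obtain ⟨w, hw⟩ := hded _ (countable_range _) (range_nonempty _) hbdd
  refine ⟨w, hw, map_eq_of_isLUB_iterate hBmono (hcont (sel w)) (fun x => ?_) hv hw (hB w).le⟩
  exact (hsel x (sel w)).trans (hB x).ge

theorem bellman_le_optimistic (hmono : ∀ σ, Monotone (T σ)) (hB : ∀ v, Bell v = T (sel v) v)
    {m : ℕ} (hm : 1 ≤ m) {x : V} (hx : x ≤ Bell x) : Bell x ≤ (T (sel x))^[m] x := by
  rw [hB] at hx ⊢
  exact (hmono _).monotone_iterate_of_le_map hx hm

theorem optimistic_le_bellman (hmono : ∀ σ, Monotone (T σ)) (hsel : ∀ v τ, T τ v ≤ T (sel v) v)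
    (hB : ∀ v, Bell v = T (sel v) v) (m : ℕ) {x : V} (hx : x ≤ Bell x) :
    (T (sel x))^[m] x ≤ Bell ((T (sel x))^[m] x) := by
  rw [hB] at hx ⊢
  calc (T (sel x))^[m] x ≤ (T (sel x))^[m + 1] x :=
        (hmono _).monotone_iterate_of_le_map hx m.le_succ
    _ = T (sel x) ((T (sel x))^[m] x) := Function.iterate_succ_apply' _ _ _
    _ ≤ _ := hsel _ _

theorem bellman_le_howard (hmono : ∀ σ, Monotone (T σ)) (hfix : ∀ σ, T σ (vfix σ) = vfix σ)
    (hup : ∀ σ v, v ≤ T σ v → v ≤ vfix σ) (hB : ∀ v, Bell v = T (sel v) v)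
    {x : V} (hx : x ≤ Bell x) : Bell x ≤ vfix (sel x) := by
  rw [hB, ← hfix (sel x)]
  exact hmono _ (le_vfix_sel_of_le_bellman hup hB hx)

theorem isOptimal_iff_isGreedy (hfix : ∀ σ, T σ (vfix σ) = vfix σ)
    (huniq : ∀ σ v, T σ v = v → v = vfix σ) (hdown : ∀ σ v, T σ v ≤ v → vfix σ ≤ v)
    (hsel : ∀ v τ, T τ v ≤ T (sel v) v) (hB : ∀ v, Bell v = T (sel v) v)
    {w : V} (hw : Bell w = w) (σ : Pol) :
    (∀ τ, vfix τ ≤ vfix σ) ↔ ∀ τ, T τ w ≤ T σ w := by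
  have hTw : T (sel w) w = w := (hB w).symm.trans hw
  constructor
  · intro hopt τ
    have hσ : vfix σ = w := le_antisymm (vfix_le_of_bellman_eq hdown hsel hB hw σ)
      ((eq_vfix_sel_of_bellman_eq huniq hB hw).trans_le (hopt _))
    calc T τ w ≤ T (sel w) w := hsel w τ
      _ = T σ w := by rw [hTw, ← hσ, hfix]
  · intro hgreedy τ
    have hσ : w = vfix σ :=
      huniq σ w (le_antisymm ((hsel w σ).trans hTw.le) (hTw.symm.le.trans (hgreedy _)))
    exact hσ ▸ vfix_le_of_bellman_eq hdown hsel hB hw τ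

end ADP

end

theorem stmt12_general {V Pol : Type*} [PartialOrder V]
    (T : Pol → V → V) (hmono : ∀ σ : Pol, Monotone (T σ))
    -- the Bellman operator:
    (Bell : V → V)
    (hBell : ∀ (v : V) (σ : Pol), (∀ τ : Pol, T τ v ≤ T σ v) → Bell v = T σ v)
    -- well-posedness:
    (vfix : Pol → V) (hfix : ∀ σ : Pol, T σ (vfix σ) = vfix σ)
    (huniq : ∀ (σ : Pol) (v : V), T σ v = v → v = vfix σ)
    -- order continuity of every policy operator:
    (hcont : ∀ (σ : Pol) (f : ℕ → V) (v : V), Monotone f → IsLUB (Set.range f) v →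
      IsLUB (Set.range fun n => T σ (f n)) (T σ v))
    -- order stability of every policy operator:
    (hup : ∀ (σ : Pol) (v : V), v ≤ T σ v → v ≤ vfix σ)
    (hdown : ∀ (σ : Pol) (v : V), T σ v ≤ v → vfix σ ≤ v)
    -- `V` is countably Dedekind complete:
    (hded : ∀ S : Set V, S.Countable → S.Nonempty → BddAbove S → ∃ w : V, IsLUB S w)
    -- `(V, 𝕋)` is bounded above:
    (hbdd : ∃ u : V, ∀ σ : Pol, T σ u ≤ u)
    -- a fixed greedy selection, defining `H v = vfix (sel v)` and
    -- `W_m v = (T (sel v))^[m] v`: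
    (sel : V → Pol) (hsel : ∀ v : V, ∀ τ : Pol, T τ v ≤ T (sel v) v)
    (m : ℕ) (hm : 1 ≤ m) :
    ∃ σstar : Pol,
      -- (B1):
      (∀ τ : Pol, vfix τ ≤ vfix σstar) ∧
      -- (B2):
      Bell (vfix σstar) = vfix σstar ∧
      (∀ v : V, Bell v = v → v = vfix σstar) ∧
      -- (B3):
      (∀ σ : Pol, (∀ τ : Pol, vfix τ ≤ vfix σ) ↔
        (∀ τ : Pol, T τ (vfix σstar) ≤ T σ (vfix σstar))) ∧
      -- (ii) convergence of VFI, OPI and HPI on `V_U`: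
      (∀ v : V, v ≤ Bell v →
        (Monotone fun n => Bell^[n] v) ∧
        IsLUB (Set.range fun n => Bell^[n] v) (vfix σstar) ∧
        (Monotone fun n => (fun w => (T (sel w))^[m] w)^[n] v) ∧
        IsLUB (Set.range fun n => (fun w => (T (sel w))^[m] w)^[n] v) (vfix σstar) ∧
        (Monotone fun n => (fun w => vfix (sel w))^[n] v) ∧
        IsLUB (Set.range fun n => (fun w => vfix (sel w))^[n] v) (vfix σstar)) := by
  obtain ⟨u, hu⟩ := hbdd
  have hB : ∀ v, Bell v = T (sel v) v := fun v => hBell v (sel v) (hsel v)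
  obtain ⟨w, -, hw⟩ := exists_isLUB_bellman_iterate hmono hcont hup hdown hded hu hsel hB
    (vfix_le_bellman hfix hsel hB (sel u))
  have hvw : vfix (sel w) = w := (eq_vfix_sel_of_bellman_eq huniq hB hw).symm
  have hbound : ∀ x, x ≤ Bell x → x ≤ w := fun x hx =>
    (le_vfix_sel_of_le_bellman hup hB hx).trans (vfix_le_of_bellman_eq hdown hsel hB hw _)
  refine ⟨sel w, ?_, ?_, ?_, ?_, fun v hv => ?_⟩ <;> rw [hvw]
  · exact vfix_le_of_bellman_eq hdown hsel hB hw
  · exact hw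
  · exact fun v hv => bellman_eq_unique hdown huniq hsel hB hv hw
  · exact isOptimal_iff_isGreedy hfix huniq hdown hsel hB hw
  have hBmono := monotone_bellman_s12 hmono hsel hB
  have hVFI : IsLUB (range fun n => Bell^[n] v) w := by
    obtain ⟨w', hw'lub, hw'⟩ :=
      exists_isLUB_bellman_iterate hmono hcont hup hdown hded hu hsel hB hv
    rwa [← bellman_eq_unique hdown huniq hsel hB hw' hw]
  have hOPI := isLUB_iterate_of_sandwich (F := fun x => (T (sel x))^[m] x) hBmono
    (fun _ => bellman_le_optimistic hmono hB hm) (fun _ => optimistic_le_bellman hmono hsel hB m)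
    hbound hv hVFI
  have hHPI := isLUB_iterate_of_sandwich (F := fun x => vfix (sel x)) hBmono
    (fun _ => bellman_le_howard hmono hfix hup hB) (fun x _ => vfix_le_bellman hfix hsel hB _)
    hbound hv hVFI
  exact ⟨hBmono.monotone_iterate_of_le_map hv, hVFI, hOPI.1, hOPI.2, hHPI.1, hHPI.2⟩

/-- Theorem t:dede: Let `(V, 𝕋)` be a regular well-posed ADP
that is order continuous and order stable, with `V` countably Dedekind
complete and `(V, 𝕋)` bounded above.  Then (i) the fundamental ADP optimality
results hold, and (ii) VFI, OPI and HPI all converge on `V_U`. -/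
theorem stmt12 {V Pol : Type*} [PartialOrder V] [Nonempty Pol]
    (T : Pol → V → V) (hmono : ∀ σ : Pol, Monotone (T σ))
    -- regularity:
    (hreg : ∀ v : V, ∃ σ : Pol, ∀ τ : Pol, T τ v ≤ T σ v)
    -- the Bellman operator:
    (Bell : V → V)
    (hBell : ∀ (v : V) (σ : Pol), (∀ τ : Pol, T τ v ≤ T σ v) → Bell v = T σ v)
    -- well-posedness:
    (vfix : Pol → V) (hfix : ∀ σ : Pol, T σ (vfix σ) = vfix σ)
    (huniq : ∀ (σ : Pol) (v : V), T σ v = v → v = vfix σ)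
    -- order continuity of every policy operator:
    (hcont : ∀ (σ : Pol) (f : ℕ → V) (v : V), Monotone f → IsLUB (Set.range f) v →
      IsLUB (Set.range fun n => T σ (f n)) (T σ v))
    -- order stability of every policy operator:
    (hup : ∀ (σ : Pol) (v : V), v ≤ T σ v → v ≤ vfix σ)
    (hdown : ∀ (σ : Pol) (v : V), T σ v ≤ v → vfix σ ≤ v)
    -- `V` is countably Dedekind complete:
    (hded : ∀ S : Set V, S.Countable → S.Nonempty → BddAbove S → ∃ w : V, IsLUB S w)
    -- `(V, 𝕋)` is bounded above:
    (hbdd : ∃ u : V, ∀ σ : Pol, T σ u ≤ u)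
    -- a fixed greedy selection, defining `H v = vfix (sel v)` and
    -- `W_m v = (T (sel v))^[m] v`:
    (sel : V → Pol) (hsel : ∀ v : V, ∀ τ : Pol, T τ v ≤ T (sel v) v)
    (m : ℕ) (hm : 1 ≤ m) :
    ∃ σstar : Pol,
      -- (B1):
      (∀ τ : Pol, vfix τ ≤ vfix σstar) ∧
      -- (B2):
      Bell (vfix σstar) = vfix σstar ∧
      (∀ v : V, Bell v = v → v = vfix σstar) ∧
      -- (B3):
      (∀ σ : Pol, (∀ τ : Pol, vfix τ ≤ vfix σ) ↔
        (∀ τ : Pol, T τ (vfix σstar) ≤ T σ (vfix σstar))) ∧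
      -- (ii) convergence of VFI, OPI and HPI on `V_U`:
      (∀ v : V, v ≤ Bell v →
        (Monotone fun n => Bell^[n] v) ∧
        IsLUB (Set.range fun n => Bell^[n] v) (vfix σstar) ∧
        (Monotone fun n => (fun w => (T (sel w))^[m] w)^[n] v) ∧
        IsLUB (Set.range fun n => (fun w => (T (sel w))^[m] w)^[n] v) (vfix σstar) ∧
        (Monotone fun n => (fun w => vfix (sel w))^[n] v) ∧
        IsLUB (Set.range fun n => (fun w => vfix (sel w))^[n] v) (vfix σstar)) :=
  stmt12_general T hmono Bell hBell vfix hfix huniq hcont hup hdown hded hbdd sel hsel m hm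
end

section
/- Consider the non-expected-utility discrete choice model: let 𝖷 (states) and 𝖠 (actions) be nonempty finite sets, 𝖦 = 𝖷 × 𝖠, let (E, ℰ_E, ν) be a probability space, let r : 𝖷 × 𝖠 × E → ℝ be bounded and measurable in its last argument, and let β ∈ (0,1). Let the certainty equivalent 𝓔 : ℝ^𝖷 → ℝ^𝖦 be order preserving with respect to the pointwise orders, map each constant function to the same constant, and be constant subadditive (𝓔(f + λ) ≤ 𝓔f + λ pointwise for every f and constant λ ≥ 0). Let Σ = 𝖠^𝖷 and, for σ ∈ Σ and g ∈ ℝ^𝖦, define (T_σ g) = 𝓔(H_σ g) where (H_σ g)(x′) = ∫ [ r(x′, σ(x′), e′) + β g(x′, σ(x′)) ] ν(de′). Then the ADP (ℝ^𝖦, {T_σ}_{σ∈Σ}) is regular and well-posed, the fundamental ADP optimality results hold ((B1) V_Σ = {v_σ : σ ∈ Σ} has a greatest element v*; (B2) v* is the unique fixed point of the Bellman operator T in ℝ^𝖦; (B3) σ is optimal if and only if σ is v*-greedy), and Howard policy iteration converges in finitely many steps: for every g ∈ ℝ^𝖦 there exists n ∈ ℕ with Hⁿg = v*. -/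
/-!
Since `𝓔` is monotone and constant subadditive, each `T_σ` is monotone and satisfies
`T_σ (g + c) ≤ T_σ g + β c` for constants `c ≥ 0`; by Blackwell's argument it is a
`β`-contraction in the sup norm. Its fixed point `v_σ` is therefore order stable: `g ≤ T_σ g`
forces `g ≤ v_σ` and `T_σ g ≤ g` forces `v_σ ≤ g`. Greedy policies exist because `𝖠` is finite.
If `τ` is `v_σ`-greedy then `v_σ = T_σ v_σ ≤ T_τ v_σ`, so `v_σ ≤ v_τ`: Howard iterates increase
through the finite set `V_Σ`, hence stall at some `v_σ` that is a fixed point of the Bellman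
operator. Such a `v_σ` dominates every `v_τ`, and (B1)–(B3) and the finite termination of policy
iteration from any starting point follow.
-/

open MeasureTheory Function
open scoped NNReal

/-- The policy operator of the non-EU discrete choice model:
`T_σ g = 𝓔 (H_σ g)` where `(H_σ g)(x') = ∫ (r x' (σ x') e' + β g(x', σ x')) ν(de')`. -/
noncomputable def polOp {X A Ev : Type*} [MeasurableSpace Ev]
    (ν : Measure Ev) (r : X → A → Ev → ℝ) (β : ℝ)
    (CE : (X → ℝ) → (X × A → ℝ)) (σ : X → A) (g : X × A → ℝ) : X × A → ℝ :=
  CE (fun x' => ∫ e', (r x' (σ x') e' + β * g (x', σ x')) ∂ν)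

/-- `σ` is `g`-greedy for the non-EU discrete choice model. -/
def greedyPol {X A Ev : Type*} [MeasurableSpace Ev]
    (ν : Measure Ev) (r : X → A → Ev → ℝ) (β : ℝ)
    (CE : (X → ℝ) → (X × A → ℝ)) (σ : X → A) (g : X × A → ℝ) : Prop :=
  ∀ τ : X → A, polOp ν r β CE τ g ≤ polOp ν r β CE σ g

theorem Monotone.exists_map_succ_eq_of_finite_range {α : Type*} [PartialOrder α] {u : ℕ → α}
    (hu : Monotone u) (hfin : (Set.range u).Finite) : ∃ n, u (n + 1) = u n := by
  obtain ⟨m, n, hmn, heq⟩ := hfin.exists_lt_map_eq_of_forall_mem (Set.mem_range_self ·)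
  exact ⟨m, le_antisymm (heq ▸ hu hmn) (hu m.le_succ)⟩

/-- Blackwell's sufficient conditions for a contraction in the sup norm. -/
theorem lipschitzWith_of_monotone_of_map_add_const_le {ι κ : Type*} [Fintype ι] [Fintype κ]
    {f : (ι → ℝ) → κ → ℝ} {β : ℝ≥0} (hmono : Monotone f)
    (hshift : ∀ (x : ι → ℝ) (c : ℝ), 0 ≤ c → f (fun i => x i + c) ≤ fun j => f x j + β * c) :
    LipschitzWith β f := by
  have hle : ∀ x y j, f x j ≤ f y j + β * dist x y := fun x y j => by
    have hxy : x ≤ fun i => y i + dist x y := fun i => by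
      have := dist_le_pi_dist x y i
      rw [Real.dist_eq] at this
      linarith [le_abs_self (x i - y i)]
    exact (hmono hxy j).trans (hshift y _ dist_nonneg j)
  refine LipschitzWith.of_dist_le_mul fun x y => ?_
  refine (dist_pi_le_iff (by positivity)).2 fun j => ?_
  rw [Real.dist_eq, abs_sub_le_iff]
  constructor
  · linarith [hle x y j]
  · linarith [dist_comm y x ▸ hle y x j]

namespace ADP

variable {P V : Type*}

/-- Order stability of `v` for `f` in the sense of Sargent and Stachurski. -/
structure OrderStable [Preorder V] (f : V → V) (v : V) : Prop where
  isFixedPt : IsFixedPt f v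
  le_of_le_map : ∀ ⦃x⦄, x ≤ f x → x ≤ v
  ge_of_map_le : ∀ ⦃x⦄, f x ≤ x → v ≤ x

theorem OrderStable.eq_of_isFixedPt [PartialOrder V] {f : V → V} {v x : V}
    (h : OrderStable f v) (hx : IsFixedPt f x) : x = v :=
  le_antisymm (h.le_of_le_map hx.ge) (h.ge_of_map_le hx.le)

theorem _root_.ContractingWith.orderStable_fixedPoint [PartialOrder V] [MetricSpace V]
    [CompleteSpace V] [Nonempty V] [OrderClosedTopology V] {K : ℝ≥0} {f : V → V}
    (hf : ContractingWith K f) (hmono : Monotone f) : OrderStable f (hf.fixedPoint f) where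
  isFixedPt := hf.fixedPoint_isFixedPt
  le_of_le_map x hx := ge_of_tendsto' (hf.tendsto_iterate_fixedPoint x)
    fun n => hmono.monotone_iterate_of_le_map hx n.zero_le
  ge_of_map_le x hx := le_of_tendsto' (hf.tendsto_iterate_fixedPoint x)
    fun n => hmono.antitone_iterate_of_map_le hx n.zero_le

def IsGreedy [Preorder V] (T : P → V → V) (σ : P) (x : V) : Prop :=
  ∀ τ, T τ x ≤ T σ x

section OrderStableADP

variable [PartialOrder V] {T : P → V → V} {v : P → V}

theorem value_le_value_of_isGreedy (hv : ∀ σ, OrderStable (T σ) (v σ)) {σ τ : P}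
    (hτ : IsGreedy T τ (v σ)) : v σ ≤ v τ :=
  (hv τ).le_of_le_map ((hv σ).isFixedPt.ge.trans (hτ σ))

theorem exists_isFixedPt_iterate_howard [Finite P] (hv : ∀ σ, OrderStable (T σ) (v σ))
    {sel : V → P} (hsel : ∀ x, IsGreedy T (sel x) x) (g : V) :
    ∃ n, IsFixedPt (fun x => v (sel x)) ((fun x => v (sel x))^[n] g) := by
  set H : V → V := fun x => v (sel x)
  have hmono : Monotone fun n => H^[n + 1] g := monotone_nat_of_le_succ fun n => by
    rw [iterate_succ_apply' H (n + 1), iterate_succ_apply']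
    exact value_le_value_of_isGreedy hv (hsel _)
  have hfin : (Set.range fun n => H^[n + 1] g).Finite :=
    (Set.finite_range v).subset <| Set.range_subset_iff.2 fun n =>
      ⟨sel (H^[n] g), (iterate_succ_apply' H n g).symm⟩
  obtain ⟨n, hn⟩ := hmono.exists_map_succ_eq_of_finite_range hfin
  exact ⟨n + 1, by rw [IsFixedPt, ← iterate_succ_apply' H]; exact hn⟩

theorem exists_isGreedy_value_self [Finite P] [Nonempty V] (hv : ∀ σ, OrderStable (T σ) (v σ))
    (hreg : ∀ x, ∃ σ, IsGreedy T σ x) : ∃ σ, IsGreedy T σ (v σ) := by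
  choose sel hsel using hreg
  obtain ⟨n, hn⟩ := exists_isFixedPt_iterate_howard hv hsel (Classical.arbitrary V)
  set h := (fun x => v (sel x))^[n] (Classical.arbitrary V)
  have hn : v (sel h) = h := hn
  exact ⟨sel h, by rw [hn]; exact hsel h⟩

variable {σstar : P}

theorem map_value_le_of_isGreedy_self (hv : ∀ σ, OrderStable (T σ) (v σ))
    (hstar : IsGreedy T σstar (v σstar)) (τ : P) : T τ (v σstar) ≤ v σstar :=
  (hstar τ).trans (hv σstar).isFixedPt.le

theorem value_le_of_isGreedy_self (hv : ∀ σ, OrderStable (T σ) (v σ))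
    (hstar : IsGreedy T σstar (v σstar)) (τ : P) : v τ ≤ v σstar :=
  (hv τ).ge_of_map_le (map_value_le_of_isGreedy_self hv hstar τ)

theorem map_value_eq_of_isGreedy (hv : ∀ σ, OrderStable (T σ) (v σ))
    (hstar : IsGreedy T σstar (v σstar)) {σ : P} (hσ : IsGreedy T σ (v σstar)) :
    T σ (v σstar) = v σstar :=
  le_antisymm (map_value_le_of_isGreedy_self hv hstar σ)
    ((hv σstar).isFixedPt.ge.trans (hσ σstar))

theorem eq_value_of_isGreedy_of_isFixedPt (hv : ∀ σ, OrderStable (T σ) (v σ))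
    (hstar : IsGreedy T σstar (v σstar)) {σ : P} {g : V} (hσ : IsGreedy T σ g)
    (hg : IsFixedPt (T σ) g) : g = v σstar :=
  le_antisymm (((hv σ).eq_of_isFixedPt hg).le.trans (value_le_of_isGreedy_self hv hstar σ))
    ((hv σstar).ge_of_map_le ((hσ σstar).trans hg.le))

theorem forall_value_le_iff_isGreedy (hv : ∀ σ, OrderStable (T σ) (v σ))
    (hstar : IsGreedy T σstar (v σstar)) (σ : P) :
    (∀ τ, v τ ≤ v σ) ↔ IsGreedy T σ (v σstar) := by
  constructor
  · intro hσ τ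
    have heq : v σ = v σstar := le_antisymm (value_le_of_isGreedy_self hv hstar σ) (hσ σstar)
    rw [← heq, (hv σ).isFixedPt, heq]
    exact map_value_le_of_isGreedy_self hv hstar τ
  · intro hσ τ
    rw [← (hv σ).eq_of_isFixedPt (map_value_eq_of_isGreedy hv hstar hσ)]
    exact value_le_of_isGreedy_self hv hstar τ

theorem exists_iterate_howard_eq_value [Finite P] (hv : ∀ σ, OrderStable (T σ) (v σ))
    (hstar : IsGreedy T σstar (v σstar)) {sel : V → P} (hsel : ∀ x, IsGreedy T (sel x) x)
    (g : V) : ∃ n, (fun x => v (sel x))^[n] g = v σstar := by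
  obtain ⟨n, hn⟩ := exists_isFixedPt_iterate_howard hv hsel g
  set h := (fun x => v (sel x))^[n] g
  have hn : v (sel h) = h := hn
  have hfix : IsFixedPt (T (sel h)) h := by
    have := (hv (sel h)).isFixedPt
    rwa [hn] at this
  exact ⟨n, eq_value_of_isGreedy_of_isFixedPt hv hstar (hsel h) hfix⟩

end OrderStableADP

end ADP

open ADP

section DiscreteChoice

variable {X A Ev : Type*} [MeasurableSpace Ev] {ν : Measure Ev} {r : X → A → Ev → ℝ} {β : ℝ}
  {CE : (X → ℝ) → (X × A → ℝ)}

theorem polOp_eq [IsProbabilityMeasure ν] (hr : ∀ x a, Integrable (r x a) ν) (σ : X → A)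
    (g : X × A → ℝ) :
    polOp ν r β CE σ g = CE fun x => ∫ e, r x (σ x) e ∂ν + β * g (x, σ x) := by
  simp [polOp, integral_add (hr _ _) (integrable_const _)]

theorem polOp_monotone [IsProbabilityMeasure ν] (hr : ∀ x a, Integrable (r x a) ν)
    (hβ : 0 ≤ β) (hCEmono : Monotone CE) (σ : X → A) : Monotone (polOp ν r β CE σ) :=
  fun g h hgh => by
    rw [polOp_eq hr, polOp_eq hr]
    exact hCEmono fun x => by gcongr; exact hgh _

theorem polOp_add_const_le [IsProbabilityMeasure ν] (hr : ∀ x a, Integrable (r x a) ν)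
    (hβ : 0 ≤ β)
    (hCEsub : ∀ (f : X → ℝ) (lam : ℝ), 0 ≤ lam →
      CE (fun x => f x + lam) ≤ fun p => CE f p + lam)
    (σ : X → A) (g : X × A → ℝ) {c : ℝ} (hc : 0 ≤ c) :
    polOp ν r β CE σ (fun p => g p + c) ≤ fun p => polOp ν r β CE σ g p + β * c := by
  rw [polOp_eq hr, polOp_eq hr]
  convert hCEsub _ (β * c) (mul_nonneg hβ hc) using 3
  ring

theorem polOp_contractingWith [Fintype X] [Fintype A] [IsProbabilityMeasure ν]
    (hr : ∀ x a, Integrable (r x a) ν) (hβ : β ∈ Set.Ioo (0 : ℝ) 1) (hCEmono : Monotone CE)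
    (hCEsub : ∀ (f : X → ℝ) (lam : ℝ), 0 ≤ lam →
      CE (fun x => f x + lam) ≤ fun p => CE f p + lam)
    (σ : X → A) : ContractingWith ⟨β, hβ.1.le⟩ (polOp ν r β CE σ) :=
  ⟨by exact_mod_cast hβ.2, lipschitzWith_of_monotone_of_map_add_const_le
    (polOp_monotone hr hβ.1.le hCEmono σ)
    fun g _ hc => polOp_add_const_le hr hβ.1.le hCEsub σ g hc⟩

theorem exists_greedyPol [Finite A] [Nonempty A] (hCEmono : Monotone CE) (g : X × A → ℝ) :
    ∃ σ, greedyPol ν r β CE σ g := by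
  choose σ hσ using fun x => Finite.exists_max fun a => ∫ e, (r x a e + β * g (x, a)) ∂ν
  exact ⟨σ, fun τ => hCEmono fun x => hσ x (τ x)⟩

end DiscreteChoice

theorem stmt19_general {X A Ev : Type*} [Fintype X] [Fintype A] [Nonempty A]
    [MeasurableSpace Ev] (ν : Measure Ev) [IsProbabilityMeasure ν]
    (r : X → A → Ev → ℝ)
    (hrbdd : ∃ M : ℝ, ∀ (x : X) (a : A) (e : Ev), |r x a e| ≤ M)
    (hrmeas : ∀ (x : X) (a : A), Measurable (r x a))
    (β : ℝ) (hβ : β ∈ Set.Ioo (0 : ℝ) 1)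
    (CE : (X → ℝ) → (X × A → ℝ))
    (hCEmono : Monotone CE)
    (hCEsub : ∀ (f : X → ℝ) (lam : ℝ), 0 ≤ lam →
      CE (fun x => f x + lam) ≤ fun p => CE f p + lam) :
    -- regularity:
    (∀ g : X × A → ℝ, ∃ σ : X → A, greedyPol ν r β CE σ g) ∧
    -- well-posedness, (B1), (B2), (B3) and finite-step convergence of HPI:
    ∃ vfix : (X → A) → (X × A → ℝ),
      (∀ σ : X → A, polOp ν r β CE σ (vfix σ) = vfix σ ∧
        ∀ g : X × A → ℝ, polOp ν r β CE σ g = g → g = vfix σ) ∧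
      ∃ σstar : X → A,
        -- (B1): `V_Σ` has greatest element `v* = vfix σstar`
        (∀ τ : X → A, vfix τ ≤ vfix σstar) ∧
        -- (B2): `v*` is the unique fixed point of the Bellman operator
        (∀ σ : X → A, greedyPol ν r β CE σ (vfix σstar) →
          polOp ν r β CE σ (vfix σstar) = vfix σstar) ∧
        (∀ (g : X × A → ℝ) (σ : X → A), greedyPol ν r β CE σ g →
          polOp ν r β CE σ g = g → g = vfix σstar) ∧
        -- (B3): `σ` is optimal iff `σ` is `v*`-greedy
        (∀ σ : X → A, (∀ τ : X → A, vfix τ ≤ vfix σ) ↔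
          greedyPol ν r β CE σ (vfix σstar)) ∧
        -- HPI converges in finitely many steps (for any greedy selection):
        (∀ sel : (X × A → ℝ) → (X → A),
          (∀ g : X × A → ℝ, greedyPol ν r β CE (sel g) g) →
          ∀ g : X × A → ℝ, ∃ n : ℕ,
            (fun h => vfix (sel h))^[n] g = vfix σstar) := by
  obtain ⟨M, hM⟩ := hrbdd
  have hr : ∀ x a, Integrable (r x a) ν := fun x a =>
    .of_bound (hrmeas x a).aestronglyMeasurable M (ae_of_all _ (hM x a))
  have hcontr := polOp_contractingWith hr hβ hCEmono hCEsub
  have hv : ∀ σ, OrderStable (polOp ν r β CE σ) ((hcontr σ).fixedPoint) := fun σ =>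
    (hcontr σ).orderStable_fixedPoint (polOp_monotone hr hβ.1.le hCEmono σ)
  have hreg : ∀ g, ∃ σ, greedyPol ν r β CE σ g := exists_greedyPol hCEmono
  obtain ⟨σstar, hstar⟩ := exists_isGreedy_value_self hv hreg
  exact ⟨hreg, _, fun σ => ⟨(hv σ).isFixedPt, fun g hg => (hv σ).eq_of_isFixedPt hg⟩, σstar,
    value_le_of_isGreedy_self hv hstar, fun σ => map_value_eq_of_isGreedy hv hstar,
    fun g σ => eq_value_of_isGreedy_of_isFixedPt hv hstar, forall_value_le_iff_isGreedy hv hstar,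
    fun sel hsel => exists_iterate_howard_eq_value hv hstar hsel⟩

/-- Proposition p:stor: For the non-EU discrete choice model
with finite state set `X`, finite action set `A`, bounded reward `r`
(measurable in the shock), discount `β ∈ (0,1)`, and a certainty equivalent
`𝓔` that is order preserving, constant preserving and constant subadditive,
the ADP `(ℝ^{X×A}, {T_σ})` is regular and well-posed, the fundamental ADP
optimality results (B1)-(B3) hold, and Howard policy iteration converges in
finitely many steps. -/
theorem stmt19 {X A Ev : Type*} [Fintype X] [Nonempty X] [Fintype A] [Nonempty A]
    [MeasurableSpace Ev] (ν : Measure Ev) [IsProbabilityMeasure ν]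
    (r : X → A → Ev → ℝ)
    (hrbdd : ∃ M : ℝ, ∀ (x : X) (a : A) (e : Ev), |r x a e| ≤ M)
    (hrmeas : ∀ (x : X) (a : A), Measurable (r x a))
    (β : ℝ) (hβ : β ∈ Set.Ioo (0 : ℝ) 1)
    (CE : (X → ℝ) → (X × A → ℝ))
    (hCEmono : Monotone CE)
    (hCEconst : ∀ c : ℝ, CE (fun _ => c) = fun _ => c)
    (hCEsub : ∀ (f : X → ℝ) (lam : ℝ), 0 ≤ lam →
      CE (fun x => f x + lam) ≤ fun p => CE f p + lam) :
    -- regularity: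
    (∀ g : X × A → ℝ, ∃ σ : X → A, greedyPol ν r β CE σ g) ∧
    -- well-posedness, (B1), (B2), (B3) and finite-step convergence of HPI:
    ∃ vfix : (X → A) → (X × A → ℝ),
      (∀ σ : X → A, polOp ν r β CE σ (vfix σ) = vfix σ ∧
        ∀ g : X × A → ℝ, polOp ν r β CE σ g = g → g = vfix σ) ∧
      ∃ σstar : X → A,
        -- (B1): `V_Σ` has greatest element `v* = vfix σstar`
        (∀ τ : X → A, vfix τ ≤ vfix σstar) ∧
        -- (B2): `v*` is the unique fixed point of the Bellman operator
        (∀ σ : X → A, greedyPol ν r β CE σ (vfix σstar) →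
          polOp ν r β CE σ (vfix σstar) = vfix σstar) ∧
        (∀ (g : X × A → ℝ) (σ : X → A), greedyPol ν r β CE σ g →
          polOp ν r β CE σ g = g → g = vfix σstar) ∧
        -- (B3): `σ` is optimal iff `σ` is `v*`-greedy
        (∀ σ : X → A, (∀ τ : X → A, vfix τ ≤ vfix σ) ↔
          greedyPol ν r β CE σ (vfix σstar)) ∧
        -- HPI converges in finitely many steps (for any greedy selection):
        (∀ sel : (X × A → ℝ) → (X → A),
          (∀ g : X × A → ℝ, greedyPol ν r β CE (sel g) g) →
          ∀ g : X × A → ℝ, ∃ n : ℕ,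
            (fun h => vfix (sel h))^[n] g = vfix σstar) :=
  stmt19_general ν r hrbdd hrmeas β hβ CE hCEmono hCEsub
end
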